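/- Let P be an abstract polytope of rank d in class 2_I, let j ∈ {0, …, d−1} with j ∉ I, and let i ∈ {1, …, d−1} with i ≠ j−1 and i ≠ j+2. Then for any two pairs F < G and F′ < G′ in P with rank(F) = rank(F′) = i−2 and rank(G) = rank(G′) = i+1, there is an automorphism γ ∈ Γ(P) with γ(F) = F′ and γ(G) = G′; in particular the intervals [F, G] and [F′, G′] are order-isomorphic. -/

import Mathlib

/-! Generic definitions about flags, flag orbits, and abstract polytopes. -/

variable {α : Type*} [PartialOrder α]

/-- Two flags (maximal chains) are in the same orbit of the automorphism group
(the group of order automorphisms) if some order automorphism maps one onto the other. -/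
def SameFlagOrbit (Φ Ψ : Flag α) : Prop :=
  ∃ γ : α ≃o α, γ '' (Φ : Set α) = (Ψ : Set α)

/-- The automorphism group has exactly two orbits on the flags. -/
def TwoFlagOrbits (α : Type*) [PartialOrder α] : Prop :=
  ∃ Φ Ψ : Flag α, ¬ SameFlagOrbit Φ Ψ ∧
    ∀ Ω : Flag α, SameFlagOrbit Ω Φ ∨ SameFlagOrbit Ω Ψ

/-- `Ψ` is the flag `Φ^i`: it differs from `Φ` in exactly the rank-`i` element
(with respect to the rank function `rk`). -/
def IsIAdjacent (rk : α → ℤ) (i : ℤ) (Φ Ψ : Flag α) : Prop :=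
  Φ ≠ Ψ ∧ ∀ x : α, rk x ≠ i → (x ∈ Φ ↔ x ∈ Ψ)

/-- A two-orbit polytope (with rank function `rk`, adjacency indices `0, …, n-1`)
is in class `2_I` if, for every flag `Φ` and every `i < n`, the `i`-adjacent flag `Φ^i`
lies in the same orbit as `Φ` exactly when `i ∈ I`. -/
def InClass (rk : α → ℤ) (n : ℕ) (I : Set ℕ) : Prop :=
  TwoFlagOrbits α ∧
    ∀ (Φ Ψ : Flag α) (i : ℕ), i < n → IsIAdjacent rk i Φ Ψ →
      (SameFlagOrbit Φ Ψ ↔ i ∈ I)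

/-- An abstract polytope of rank `d`: a bounded poset, graded by a rank function `rk`
taking values `-1, 0, …, d`, in which every flag (maximal chain) has exactly one element
of each rank, satisfying the diamond condition and strong flag-connectivity. -/
structure IsAbstractPolytope (α : Type*) [PartialOrder α] [BoundedOrder α]
    (rk : α → ℤ) (d : ℕ) : Prop where
  rk_bot : rk ⊥ = -1
  rk_top : rk ⊤ = d
  rk_strictMono : StrictMono rk
  rk_cover : ∀ x y : α, x ⋖ y → rk y = rk x + 1
  flag_ranks : ∀ (Φ : Flag α) (i : ℤ), -1 ≤ i → i ≤ d → ∃! x, x ∈ Φ ∧ rk x = i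
  diamond : ∀ x y : α, x < y → rk y = rk x + 2 →
    ∃ a b : α, a ≠ b ∧ ∀ z : α, (x < z ∧ z < y) ↔ (z = a ∨ z = b)
  connected : ∀ Φ Ψ : Flag α, ∃ (n : ℕ) (c : Fin (n + 1) → Flag α),
    c 0 = Φ ∧ c (Fin.last n) = Ψ ∧
    (∀ k : Fin n, ∃ i : ℤ, IsIAdjacent rk i (c k.castSucc) (c k.succ)) ∧
    (∀ k, (Φ : Set α) ∩ (Ψ : Set α) ⊆ (c k : Set α))

/-! An automorphism carrying a flag `Φ ∋ F, G` onto a flag `Ω ∋ F', G'` must send `F, G` to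
`F', G'`, since it preserves ranks. If a flag `Ψ ∋ F', G'` is not in the orbit of `Φ`, its
`j`-adjacent flag `Ψ^j` is not in the orbit of `Ψ` (as `j ∉ I`), so, there being only two
orbits, it is in that of `Φ`; and `Ψ^j` still contains `F'` and `G'`, whose ranks `i - 2` and
`i + 1` differ from `j`. -/

namespace SameFlagOrbit

lemma symm {Φ Ψ : Flag α} (h : SameFlagOrbit Φ Ψ) : SameFlagOrbit Ψ Φ := by
  obtain ⟨γ, hγ⟩ := h
  exact ⟨γ.symm, by rw [← hγ, γ.symm_image_image]⟩

lemma trans {Φ Ψ Ω : Flag α} (h₁ : SameFlagOrbit Φ Ψ) (h₂ : SameFlagOrbit Ψ Ω) :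
    SameFlagOrbit Φ Ω := by
  obtain ⟨γ, hγ⟩ := h₁
  obtain ⟨δ, hδ⟩ := h₂
  exact ⟨γ.trans δ, by rw [← hδ, ← hγ, Set.image_image]; rfl⟩

end SameFlagOrbit

lemma TwoFlagOrbits.sameFlagOrbit_of_not_of_not (h : TwoFlagOrbits α) {Φ Ψ Ω : Flag α}
    (hΦΨ : ¬ SameFlagOrbit Φ Ψ) (hΨΩ : ¬ SameFlagOrbit Ψ Ω) : SameFlagOrbit Φ Ω := by
  obtain ⟨A, B, -, hAB⟩ := h
  rcases hAB Φ with hΦ | hΦ <;> rcases hAB Ψ with hΨ | hΨ <;> rcases hAB Ω with hΩ | hΩ <;>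
    first
    | exact hΦ.trans hΩ.symm
    | exact absurd (hΦ.trans hΨ.symm) hΦΨ
    | exact absurd (hΨ.trans hΩ.symm) hΨΩ

section StrictMonoRank

variable {β : Type*} [Preorder β] {rk : α → β} {Φ : Flag α} {x y : α}

lemma StrictMono.lt_of_mem_flag (hrk : StrictMono rk) (hx : x ∈ Φ) (hy : y ∈ Φ)
    (h : rk x < rk y) : x < y := by
  rcases Φ.le_or_le hx hy with hxy | hyx
  · exact hxy.lt_of_ne (by rintro rfl; exact h.false)
  · exact absurd (hrk.monotone hyx) h.not_ge

lemma StrictMono.le_of_mem_flag (hrk : StrictMono rk) (hx : x ∈ Φ) (hy : y ∈ Φ)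
    (h : rk x ≤ rk y) : x ≤ y := by
  rcases Φ.le_or_le hx hy with hxy | hyx
  · exact hxy
  · rcases hyx.lt_or_eq with hlt | rfl
    · exact absurd (hrk hlt) h.not_gt
    · exact le_rfl

lemma StrictMono.eq_of_mem_flag (hrk : StrictMono rk) (hx : x ∈ Φ) (hy : y ∈ Φ)
    (h : rk x = rk y) : x = y :=
  (hrk.le_of_mem_flag hx hy h.le).antisymm (hrk.le_of_mem_flag hy hx h.ge)

end StrictMonoRank

namespace IsAbstractPolytope

variable [BoundedOrder α] {rk : α → ℤ} {d : ℕ} (hP : IsAbstractPolytope α rk d)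
include hP

lemma neg_one_le_rk (x : α) : -1 ≤ rk x :=
  hP.rk_bot ▸ hP.rk_strictMono.monotone bot_le

lemma rk_le (x : α) : rk x ≤ d :=
  hP.rk_top ▸ hP.rk_strictMono.monotone le_top

lemma exists_mem_flag_rk_eq (Φ : Flag α) {k : ℤ} (h₁ : -1 ≤ k) (h₂ : k ≤ d) :
    ∃ x ∈ Φ, rk x = k :=
  (hP.flag_ranks Φ k h₁ h₂).exists

lemma exists_covBy {x : α} (hx : ⊥ < x) : ∃ u, u ⋖ x := by
  have hrk := hP.rk_strictMono hx
  rw [hP.rk_bot] at hrk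
  obtain ⟨Φ, hxΦ⟩ := Flag.exists_mem x
  obtain ⟨u, huΦ, hu⟩ :=
    hP.exists_mem_flag_rk_eq Φ (k := rk x - 1) (by omega) (by linarith [hP.rk_le x])
  refine ⟨u, hP.rk_strictMono.lt_of_mem_flag huΦ hxΦ (by omega), fun v huv hvx => ?_⟩
  have := hP.rk_strictMono huv
  have := hP.rk_strictMono hvx
  omega

lemma rk_apply (γ : α ≃o α) (x : α) : rk (γ x) = rk x := by
  induction h : (rk x + 1).toNat using Nat.strong_induction_on generalizing x with
  | _ n ih =>
  obtain rfl | hx := eq_bot_or_bot_lt x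
  · rw [map_bot]
  obtain ⟨u, hu⟩ := hP.exists_covBy hx
  have hux := hP.rk_cover _ _ hu
  have hγux := hP.rk_cover _ _ ((apply_covBy_apply_iff γ).2 hu)
  have := ih _ (by have := hP.neg_one_le_rk u; omega) u rfl
  omega

lemma apply_eq_of_image_flag {γ : α ≃o α} {Φ Ω : Flag α} (hγ : γ '' (Φ : Set α) = Ω)
    {x y : α} (hx : x ∈ Φ) (hy : y ∈ Ω) (h : rk x = rk y) : γ x = y :=
  hP.rk_strictMono.eq_of_mem_flag (hγ ▸ Set.mem_image_of_mem γ hx :) hy (by rw [hP.rk_apply, h])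

lemma exists_ne_between {x y z : α} (hxz : x < z) (hzy : z < y) (h : rk y = rk x + 2) :
    ∃ w ≠ z, x < w ∧ w < y := by
  obtain ⟨a, b, hab, hmem⟩ := hP.diamond x y (hxz.trans hzy) h
  rcases (hmem z).1 ⟨hxz, hzy⟩ with rfl | rfl
  · exact ⟨b, hab.symm, (hmem b).2 (Or.inr rfl)⟩
  · exact ⟨a, hab, (hmem a).2 (Or.inl rfl)⟩

/-- `Φ^j` is obtained by extending `{w} ∪ (Φ \ {z})` to a flag, where `z` is the rank-`j`
element of `Φ` and `w` the other element of the diamond around it. -/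
lemma exists_isIAdjacent (Φ : Flag α) {j : ℕ} (hj : j < d) :
    ∃ Ψ : Flag α, IsIAdjacent rk j Φ Ψ := by
  have hrk := hP.rk_strictMono
  obtain ⟨x, hxΦ, hx⟩ := hP.exists_mem_flag_rk_eq Φ (k := j - 1) (by omega) (by omega)
  obtain ⟨y, hyΦ, hy⟩ := hP.exists_mem_flag_rk_eq Φ (k := j + 1) (by omega) (by omega)
  obtain ⟨z, hzΦ, hz⟩ := hP.exists_mem_flag_rk_eq Φ (k := j) (by omega) (by omega)
  obtain ⟨w, hwz, hxw, hwy⟩ := hP.exists_ne_between (hrk.lt_of_mem_flag hxΦ hzΦ (by omega))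
    (hrk.lt_of_mem_flag hzΦ hyΦ (by omega)) (by omega)
  have hw : rk w = j := by
    have := hrk hxw
    have := hrk hwy
    omega
  have hchain : IsChain (· ≤ ·) (insert w {u | u ∈ Φ ∧ rk u ≠ j}) := by
    refine (Φ.chain_le.mono fun u hu => hu.1).insert fun u ⟨huΦ, hu⟩ _ => ?_
    rcases hu.lt_or_gt with hlt | hgt
    · exact Or.inr ((hrk.le_of_mem_flag huΦ hxΦ (by omega)).trans hxw.le)
    · exact Or.inl (hwy.le.trans (hrk.le_of_mem_flag hyΦ huΦ (by omega)))
  obtain ⟨Ψ, hΨ⟩ := hchain.exists_subset_flag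
  refine ⟨Ψ, fun hΦΨ => hwz ?_,
    fun u hu => ⟨fun huΦ => hΨ (Or.inr ⟨huΦ, hu⟩), fun huΨ => ?_⟩⟩
  · exact hrk.eq_of_mem_flag (hΨ (Set.mem_insert w _)) (hΦΨ ▸ hzΦ) (hw.trans hz.symm)
  · obtain ⟨v, hvΦ, hv⟩ := hP.exists_mem_flag_rk_eq Φ (hP.neg_one_le_rk u) (hP.rk_le u)
    obtain rfl : v = u := hrk.eq_of_mem_flag (hΨ (Or.inr ⟨hvΦ, hv ▸ hu⟩)) huΨ hv
    exact hvΦ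

lemma exists_sameFlagOrbit_of_not_mem {I : Set ℕ} (hC : InClass rk d I) {j : ℕ} (hj : j < d)
    (hjI : j ∉ I) (Φ Ψ : Flag α) :
    ∃ Ω : Flag α, SameFlagOrbit Φ Ω ∧ ∀ x, rk x ≠ j → x ∈ Ψ → x ∈ Ω := by
  by_cases hΦΨ : SameFlagOrbit Φ Ψ
  · exact ⟨Ψ, hΦΨ, fun _ _ hx => hx⟩
  obtain ⟨Ψ', hΨΨ'⟩ := hP.exists_isIAdjacent Ψ hj
  have hΨΨ'_orbit : ¬ SameFlagOrbit Ψ Ψ' := fun h => hjI ((hC.2 Ψ Ψ' j hj hΨΨ').1 h)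
  exact ⟨Ψ', hC.1.sameFlagOrbit_of_not_of_not hΦΨ hΨΨ'_orbit,
    fun x hx hxΨ => (hΨΨ'.2 x hx).1 hxΨ⟩

end IsAbstractPolytope

/-- Mathlib's `OrderIso.Icc` is stated for lattices only. -/
def OrderIso.IccOfPartialOrder {β : Type*} [PartialOrder β] (e : α ≃o β) (x y : α) :
    Set.Icc x y ≃o Set.Icc (e x) (e y) where
  toFun z := ⟨e z, by simp only [Set.mem_Icc, map_le_map_iff]; exact z.property⟩
  invFun z := ⟨e.symm z, by
    simp only [Set.mem_Icc, e.le_symm_apply, e.symm_apply_le]; exact z.property⟩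
  left_inv z := by simp
  right_inv z := by simp
  map_rel_iff' := by simp

theorem transitive_on_sections_general {α : Type*} [PartialOrder α] [BoundedOrder α]
    (rk : α → ℤ) (d : ℕ) (hP : IsAbstractPolytope α rk d)
    (I : Set ℕ) (h2 : InClass rk d I)
    (j : ℕ) (hj : j < d) (hjI : j ∉ I)
    (i : ℕ)
    (hij1 : (i : ℤ) ≠ (j : ℤ) - 1) (hij2 : (i : ℤ) ≠ (j : ℤ) + 2)
    (F G F' G' : α) (hFG : F < G) (hFG' : F' < G')
    (hF : rk F = (i : ℤ) - 2) (hG : rk G = (i : ℤ) + 1)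
    (hF' : rk F' = (i : ℤ) - 2) (hG' : rk G' = (i : ℤ) + 1) :
    (∃ γ : α ≃o α, γ F = F' ∧ γ G = G') ∧
      Nonempty (↥(Set.Icc F G) ≃o ↥(Set.Icc F' G')) := by
  obtain ⟨Φ, hFΦ, hGΦ⟩ := Flag.exists_mem_mem hFG.le
  obtain ⟨Ψ, hF'Ψ, hG'Ψ⟩ := Flag.exists_mem_mem hFG'.le
  obtain ⟨Ω, ⟨γ, hγ⟩, hΨΩ⟩ := hP.exists_sameFlagOrbit_of_not_mem h2 hj hjI Φ Ψ
  have hγF : γ F = F' :=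
    hP.apply_eq_of_image_flag hγ hFΦ (hΨΩ F' (by omega) hF'Ψ) (hF.trans hF'.symm)
  have hγG : γ G = G' :=
    hP.apply_eq_of_image_flag hγ hGΦ (hΨΩ G' (by omega) hG'Ψ) (hG.trans hG'.symm)
  exact ⟨⟨γ, hγF, hγG⟩, ⟨hγF ▸ hγG ▸ γ.IccOfPartialOrder F G⟩⟩

/-- If `P` is an abstract polytope of rank `d` in class `2_I`,
`j ∈ {0, …, d-1}` with `j ∉ I`, and `i ∈ {1, …, d-1}` with `i ≠ j - 1` and `i ≠ j + 2`,
then `Γ(P)` acts transitively on pairs `F < G` of incident faces of ranks `i - 2` and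
`i + 1`; in particular, all the sections `G/F` are order-isomorphic. -/
theorem transitive_on_sections {α : Type*} [PartialOrder α] [BoundedOrder α]
    (rk : α → ℤ) (d : ℕ) (hP : IsAbstractPolytope α rk d)
    (I : Set ℕ) (h2 : InClass rk d I)
    (j : ℕ) (hj : j < d) (hjI : j ∉ I)
    (i : ℕ) (hi1 : 1 ≤ i) (hi2 : i ≤ d - 1)
    (hij1 : (i : ℤ) ≠ (j : ℤ) - 1) (hij2 : (i : ℤ) ≠ (j : ℤ) + 2)
    (F G F' G' : α) (hFG : F < G) (hFG' : F' < G')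
    (hF : rk F = (i : ℤ) - 2) (hG : rk G = (i : ℤ) + 1)
    (hF' : rk F' = (i : ℤ) - 2) (hG' : rk G' = (i : ℤ) + 1) :
    (∃ γ : α ≃o α, γ F = F' ∧ γ G = G') ∧
      Nonempty (↥(Set.Icc F G) ≃o ↥(Set.Icc F' G')) :=
  transitive_on_sections_general rk d hP I h2 j hj hjI i hij1 hij2 F G F' G' hFG hFG' hF hG hF' hG'
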